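/- arXiv:1410.4888 — 2 statements merged into one kernel-verified Lean document; each statement's English description precedes it below -/
import Mathlib

section
/- Let g ∈ L¹(ℝ) ∩ L²(ℝ) and m ≥ 2 an integer. If the system {g_{k,j,m}(x) = m^{k/2} g(m^k x − j) : k ∈ ℕ₀, j ∈ ℤ} is orthonormal in L²(ℝ), then ĝ(0) = 0, i.e. ∫_ℝ g(x) dx = 0. -/
open MeasureTheory Real Complex

noncomputable def dilTrans (m : ℕ) (g : ℝ → ℂ) (k : ℕ) (j : ℤ) : ℝ → ℂ :=
  fun x => (Real.sqrt ((m : ℝ) ^ k) : ℂ) * g ((m : ℝ) ^ k * x - (j : ℝ))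

/-! Suppose `c = ∫ g ≠ 0` and test the system against the indicator of `(0, 1]`: its coefficient
on `g_{n,j}` is `m^{-n/2} ∫_{-j}^{m^n-j} g`, and for the `≈ m^n` indices `T ≤ j ≤ m^n - T` that
integral is close to `c`. So at every large scale `n` the coefficients have square sum at least
`‖c‖² / 8`, whereas Bessel's inequality makes the square sums over the scales summable. -/

open Filter Topology

theorem MeasureTheory.MemLp.comp_mul_sub {E : Type*} [NormedAddCommGroup E] {g : ℝ → E}
    {p : ENNReal} (hg : MemLp g p) {a : ℝ} (ha : a ≠ 0) (b : ℝ) :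
    MemLp (fun x => g (a * x - b)) p := by
  have hmap : Measure.map (fun x : ℝ => a * x - b) volume = ENNReal.ofReal |a⁻¹| • volume := by
    change Measure.map ((· - b) ∘ (a * ·)) volume = _
    rw [← Measure.map_map (measurable_sub_const b) (measurable_const_mul a),
      Real.map_volume_mul_left ha, Measure.map_smul, map_sub_right_eq_self]
  exact (hmap ▸ hg.smul_measure ENNReal.ofReal_ne_top).comp_of_map
    ((measurable_const_mul a).sub_const b).aemeasurable

section Bessel

variable {α 𝕜 ι : Type*} [RCLike 𝕜] [MeasurableSpace α] [DecidableEq ι] {μ : Measure α}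
  {F : ι → α → 𝕜}

theorem orthonormal_toLp_of_integral_mul_conj (hF : ∀ i, MemLp (F i) 2 μ)
    (horth : ∀ i i', ∫ x, F i x * starRingEnd 𝕜 (F i' x) ∂μ = if i = i' then 1 else 0) :
    Orthonormal 𝕜 fun i => (hF i).toLp :=
  orthonormal_iff_ite.mpr fun i i' => by
    simp_rw [L2.inner_def, @eq_comm _ i, ← horth i' i]
    refine integral_congr_ae ?_
    filter_upwards [(hF i).coeFn_toLp, (hF i').coeFn_toLp] with x hi hi'
    rw [hi, hi', RCLike.inner_apply, mul_comm]

theorem summable_norm_setIntegral_sq_of_orthonormal (hF : ∀ i, MemLp (F i) 2 μ)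
    (horth : ∀ i i', ∫ x, F i x * starRingEnd 𝕜 (F i' x) ∂μ = if i = i' then 1 else 0)
    {s : Set α} (hs : MeasurableSet s) (hμs : μ s ≠ ⊤) :
    Summable fun i => ‖∫ x in s, F i x ∂μ‖ ^ 2 := by
  have := (orthonormal_toLp_of_integral_mul_conj hF horth).inner_products_summable
    (indicatorConstLp 2 hs hμs (1 : 𝕜))
  refine this.congr fun i => ?_
  rw [norm_inner_symm, L2.inner_indicatorConstLp_one,
    integral_congr_ae (ae_restrict_of_ae (hF i).coeFn_toLp)]

end Bessel

theorem exists_forall_lt_norm_intervalIntegral {E : Type*} [NormedAddCommGroup E]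
    [NormedSpace ℝ E] {g : ℝ → E} (hg : Integrable g) {r : ℝ} (hr : r < ‖∫ x, g x‖) :
    ∃ T : ℕ, ∀ a b : ℝ, a ≤ -T → T ≤ b → r < ‖∫ x in a..b, g x‖ := by
  have hev : ∀ᶠ p : ℝ × ℝ in atBot ×ˢ atTop, r < ‖∫ x in p.1..p.2, g x‖ :=
    (intervalIntegral_tendsto_integral hg tendsto_fst tendsto_snd).norm.eventually
      (lt_mem_nhds hr)
  obtain ⟨P, hP, Q, hQ, hPQ⟩ := eventually_prod_iff.1 hev
  obtain ⟨a₀, ha₀⟩ := eventually_atBot.1 hP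
  obtain ⟨b₀, hb₀⟩ := eventually_atTop.1 hQ
  have hceil := Nat.le_ceil (max (-a₀) b₀)
  refine ⟨⌈max (-a₀) b₀⌉₊, fun a b ha hb => hPQ (ha₀ a ?_) (hb₀ b ?_)⟩ <;>
    linarith [le_max_left (-a₀) b₀, le_max_right (-a₀) b₀]

theorem half_le_sum_Icc_of_forall_le {a : ℤ → ℝ} {T M : ℕ} {δ : ℝ} (hδ : 0 ≤ δ) (hM : 0 < M)
    (hTM : 4 * T ≤ M) (ha : ∀ j : ℤ, T ≤ j → j + T ≤ M → δ / M ≤ a j) :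
    δ / 2 ≤ ∑ j ∈ Finset.Icc (T : ℤ) (M - T), a j := by
  have hcard : ((Finset.Icc (T : ℤ) (M - T)).card : ℤ) = M - 2 * T + 1 := by
    rw [Int.card_Icc, Int.toNat_of_nonneg (by omega)]
    ring
  have hsum := Finset.card_nsmul_le_sum (Finset.Icc (T : ℤ) (M - T)) a (δ / M) fun j hj => by
    obtain ⟨h₁, h₂⟩ := Finset.mem_Icc.1 hj
    exact ha j h₁ (by omega)
  rw [nsmul_eq_mul, show ((Finset.Icc (T : ℤ) (M - T)).card : ℝ) = M - 2 * T + 1 by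
    exact_mod_cast hcard] at hsum
  have hMR : (0 : ℝ) < M := by exact_mod_cast hM
  have hTMR : 4 * (T : ℝ) ≤ M := by exact_mod_cast hTM
  calc δ / 2 = M / 2 * (δ / M) := by field_simp
    _ ≤ (M - 2 * T + 1) * (δ / M) := by gcongr; linarith
    _ ≤ _ := hsum

theorem memLp_dilTrans {m : ℕ} (hm : 0 < m) {g : ℝ → ℂ} {p : ENNReal} (hg : MemLp g p) (k : ℕ)
    (j : ℤ) : MemLp (dilTrans m g k j) p :=
  (hg.comp_mul_sub (by positivity) _).const_mul _

theorem norm_setIntegral_Ioc_dilTrans_sq {m : ℕ} (hm : 0 < m) (g : ℝ → ℂ) (k : ℕ) (j : ℤ) :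
    ‖∫ x in Set.Ioc 0 1, dilTrans m g k j x‖ ^ 2
      = ‖∫ y in -(j : ℝ)..(m : ℝ) ^ k - j, g y‖ ^ 2 / (m : ℝ) ^ k := by
  have hA : (0 : ℝ) < (m : ℝ) ^ k := by positivity
  unfold dilTrans
  rw [← intervalIntegral.integral_of_le zero_le_one, intervalIntegral.integral_const_mul,
    intervalIntegral.integral_comp_mul_sub (f := g) hA.ne', mul_zero, zero_sub, mul_one, norm_mul,
    norm_smul, Complex.norm_real, Real.norm_of_nonneg (Real.sqrt_nonneg _),
    Real.norm_of_nonneg (inv_nonneg.2 hA.le), mul_pow, mul_pow, Real.sq_sqrt hA.le]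
  field_simp

theorem half_sq_le_sum_norm_setIntegral_Ioc_dilTrans_sq {m : ℕ} (hm : 0 < m) {g : ℝ → ℂ}
    {r : ℝ} (hr : 0 ≤ r) {T : ℕ} (hT : ∀ a b : ℝ, a ≤ -T → T ≤ b → r < ‖∫ x in a..b, g x‖)
    {n : ℕ} (hn : 4 * T ≤ m ^ n) :
    r ^ 2 / 2 ≤ ∑ j ∈ Finset.Icc (T : ℤ) (m ^ n - T),
      ‖∫ x in Set.Ioc 0 1, dilTrans m g n j x‖ ^ 2 := by
  refine half_le_sum_Icc_of_forall_le (by positivity) (by positivity) hn fun j h₁ h₂ => ?_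
  rw [norm_setIntegral_Ioc_dilTrans_sq hm, Nat.cast_pow]
  have h₁' : (T : ℝ) ≤ j := by exact_mod_cast h₁
  have h₂' : (j : ℝ) + T ≤ (m : ℝ) ^ n := by exact_mod_cast h₂
  gcongr
  exact (hT _ _ (by linarith) (by linarith)).le

theorem stmt1 (m : ℕ) (hm : 2 ≤ m) (g : ℝ → ℂ)
    (hg1 : Integrable g (volume : Measure ℝ)) (hg2 : MemLp g 2 (volume : Measure ℝ))
    (horth : ∀ (k k' : ℕ) (j j' : ℤ),
      ∫ x : ℝ, dilTrans m g k j x * (starRingEnd ℂ) (dilTrans m g k' j' x)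
        = if k = k' ∧ j = j' then 1 else 0) :
    ∫ x : ℝ, g x = 0 := by
  by_contra hc
  have hm0 : 0 < m := by omega
  set c := ∫ x, g x
  let a (p : ℕ × ℤ) : ℝ := ‖∫ x in Set.Ioc 0 1, dilTrans m g p.1 p.2 x‖ ^ 2
  have hsum : Summable a :=
    summable_norm_setIntegral_sq_of_orthonormal
      (F := fun p : ℕ × ℤ => dilTrans m g p.1 p.2) (fun p => memLp_dilTrans hm0 hg2 p.1 p.2)
      (fun p q => by simp only [horth, Prod.ext_iff]) measurableSet_Ioc (by simp)
  obtain ⟨T, hT⟩ := exists_forall_lt_norm_intervalIntegral hg1 (r := ‖c‖ / 2)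
    (by linarith [norm_pos_iff.2 hc])
  have hlarge : ∀ᶠ n in atTop, ‖c‖ ^ 2 / 8 ≤ ∑' j, a (n, j) := by
    filter_upwards [(tendsto_pow_atTop_atTop_of_one_lt hm).eventually_ge_atTop (4 * T)]
      with n hn
    calc ‖c‖ ^ 2 / 8 = (‖c‖ / 2) ^ 2 / 2 := by ring
      _ ≤ ∑ j ∈ Finset.Icc (T : ℤ) (m ^ n - T), a (n, j) :=
        half_sq_le_sum_norm_setIntegral_Ioc_dilTrans_sq hm0 (by positivity) hT hn
      _ ≤ ∑' j, a (n, j) := (hsum.prod_factor n).sum_le_tsum _ fun _ _ => by positivity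
  have hsmall : ∀ᶠ n in atTop, ∑' j, a (n, j) < ‖c‖ ^ 2 / 8 :=
    hsum.prod.tendsto_atTop_zero.eventually (gt_mem_nhds (by positivity))
  obtain ⟨n, hn₁, hn₂⟩ := (hlarge.and hsmall).exists
  exact hn₂.not_ge hn₁
end

section
/- Let m ≥ 2 and let ξ be a locally integrable function on ℝ⁺ = [0,∞) such that ∫_{ℝ⁺} ξ(t) h^{(ν)}_{k,j,m}(t) dt = 0 for all k ∈ ℤ, j ∈ ℕ₀, 1 ≤ ν ≤ m−1, where h^{(ν)}_{k,j,m}(x) = m^{k/2} h^{(ν)}(m^k x − j) and {h^{(ν)}}_{ν=0}^{m−1} is an orthonormal basis of span{√m χ_{[l/m,(l+1)/m]} : 0 ≤ l ≤ m−1} with h^{(0)} = χ_{[0,1]}. Then ξ is almost everywhere equal to a constant on ℝ⁺. -/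
/-!
Let `C` be the `m × m` matrix of values of `h^{(ν)}` on the pieces `(l/m, (l+1)/m)`.
Orthonormality says `C Cᵀ = m • 1`, and row `0` of `C` is constant `1`. On an `m`-adic interval
`I = [j m⁻ᵏ, (j+1) m⁻ᵏ]`, `h^{(ν)}_{k,j,m}` is a step function on the `m` children of `I` with
values `√(mᵏ) C_{ν l}`, so the vanishing Haar coefficients of `ξ` say that the vector of
integrals of `ξ` over the children of `I` is orthogonal to the rows `1, …, m-1`. Since also
`Cᵀ C = m • 1`, this vector is constant: each child carries `1/m` of the integral over `I`.
Hence the mean of `ξ` over every `m`-adic interval is the same number `c`, and Lebesgue's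
differentiation theorem along the `m`-adic intervals containing a point gives `ξ = c` a.e.
-/

open MeasureTheory Real Set

noncomputable def dilZ (m : ℕ) (h : ℝ → ℝ) (k : ℤ) (j : ℕ) (x : ℝ) : ℝ :=
  Real.sqrt ((m : ℝ) ^ k) * h ((m : ℝ) ^ k * x - (j : ℝ))

open Filter Topology intervalIntegral
open scoped Matrix

section PiecewiseConstant

variable {f g : ℝ → ℝ} {a b c : ℝ}

theorem intervalIntegrable_mul_of_eqOn_Ioo (hab : a ≤ b) (hf : IntervalIntegrable f volume a b)
    (hg : EqOn g (fun _ => c) (Ioo a b)) :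
    IntervalIntegrable (fun x => f x * g x) volume a b :=
  (hf.mul_const c).congr_uIoo fun x hx => by
    rw [uIoo_of_le hab] at hx
    simp [hg hx]

theorem integral_mul_of_eqOn_Ioo (hab : a ≤ b) (hg : EqOn g (fun _ => c) (Ioo a b)) :
    ∫ x in a..b, f x * g x = c * ∫ x in a..b, f x := by
  rw [← intervalIntegral.integral_const_mul]
  exact integral_congr_Ioo_of_le hab fun x hx => by simp [hg hx, mul_comm]

theorem integral_mul_eq_sum_of_eqOn_Ioo {p v : ℕ → ℝ} {n : ℕ}
    (hp : ∀ l < n, p l ≤ p (l + 1))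
    (hf : ∀ l < n, IntervalIntegrable f volume (p l) (p (l + 1)))
    (hg : ∀ l < n, EqOn g (fun _ => v l) (Ioo (p l) (p (l + 1)))) :
    ∫ x in p 0..p n, f x * g x =
      ∑ l ∈ Finset.range n, v l * ∫ x in p l..p (l + 1), f x := by
  rw [← sum_integral_adjacent_intervals fun l hl =>
    intervalIntegrable_mul_of_eqOn_Ioo (hp l hl) (hf l hl) (hg l hl)]
  refine Finset.sum_congr rfl fun l hl => ?_
  rw [Finset.mem_range] at hl
  exact integral_mul_of_eqOn_Ioo (hp l hl) (hg l hl)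

end PiecewiseConstant

def IsMAdicStep (m : ℕ) (g : ℝ → ℝ) : Prop :=
  ∀ l < m, ∀ x ∈ Ioo ((l : ℝ) / m) (((l : ℝ) + 1) / m),
    ∀ y ∈ Ioo ((l : ℝ) / m) (((l : ℝ) + 1) / m), g x = g y

/-- The constant value of an `IsMAdicStep` function on the piece `(l/m, (l+1)/m)`. -/
noncomputable def stepValue (m : ℕ) (g : ℝ → ℝ) (l : ℕ) : ℝ :=
  g ((2 * l + 1) / (2 * m))

theorem two_mul_add_one_div_mem_Ioo {m l : ℕ} (hl : l < m) :
    (2 * (l : ℝ) + 1) / (2 * m) ∈ Ioo ((l : ℝ) / m) (((l : ℝ) + 1) / m) := by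
  have hm : (0 : ℝ) < m := by exact_mod_cast (Nat.zero_le l).trans_lt hl
  constructor <;> rw [div_lt_div_iff₀ (by positivity) (by positivity)] <;> nlinarith

theorem IsMAdicStep.eqOn {m l : ℕ} {g : ℝ → ℝ} (hg : IsMAdicStep m g) (hl : l < m) :
    EqOn g (fun _ => stepValue m g l) (Ioo ((l : ℝ) / m) (((l : ℝ) + 1) / m)) :=
  fun x hx => hg l hl x hx _ (two_mul_add_one_div_mem_Ioo hl)

theorem setIntegral_Icc_mul_of_isMAdicStep {m : ℕ} (hm : 0 < m) {g₁ g₂ : ℝ → ℝ}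
    (hg₁ : IsMAdicStep m g₁) (hg₂ : IsMAdicStep m g₂) :
    ∫ x in Icc (0 : ℝ) 1, g₁ x * g₂ x =
      (∑ l ∈ Finset.range m, stepValue m g₁ l * stepValue m g₂ l) / m := by
  have hm' : (m : ℝ) ≠ 0 := by positivity
  have hpieces := integral_mul_eq_sum_of_eqOn_Ioo (f := fun _ => 1)
    (g := fun x => g₁ x * g₂ x) (p := fun l : ℕ => (l : ℝ) / m) (n := m)
    (v := fun l => stepValue m g₁ l * stepValue m g₂ l)
    (fun l _ => by gcongr; simp) (fun _ _ => intervalIntegrable_const)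
    (fun l hl x hx => by push_cast at hx; simp [(hg₁.eqOn hl) hx, (hg₂.eqOn hl) hx])
  push_cast at hpieces
  simp only [one_mul, div_self hm', zero_div, intervalIntegral.integral_const,
    smul_eq_mul, mul_one] at hpieces
  rw [integral_Icc_eq_integral_Ioc, ← integral_of_le zero_le_one, hpieces, Finset.sum_div]
  refine Finset.sum_congr rfl fun l _ => ?_
  field_simp
  ring

noncomputable def madicPoint (m : ℕ) (k : ℤ) (j : ℕ) : ℝ := j / (m : ℝ) ^ k

/-- The integral of `ξ` over the `m`-adic interval `[j m⁻ᵏ, (j+1) m⁻ᵏ]`, the support of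
`dilZ m g k j` when `g` is supported in `[0, 1]`. -/
noncomputable def madicIntegral (m : ℕ) (ξ : ℝ → ℝ) (k : ℤ) (j : ℕ) : ℝ :=
  ∫ x in madicPoint m k j..madicPoint m k (j + 1), ξ x

section MAdic

variable {m : ℕ} {k : ℤ} {j : ℕ}

theorem madicPoint_nonneg : 0 ≤ madicPoint m k j := by
  unfold madicPoint
  positivity

theorem madicPoint_le_succ : madicPoint m k j ≤ madicPoint m k (j + 1) := by
  unfold madicPoint
  gcongr
  simp

theorem madicPoint_succ_sub : madicPoint m k (j + 1) - madicPoint m k j = ((m : ℝ) ^ k)⁻¹ := by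
  simp only [madicPoint, ← sub_div]
  push_cast
  ring

theorem madicPoint_succ_mul (hm : m ≠ 0) : madicPoint m (k + 1) (m * j) = madicPoint m k j := by
  have : (m : ℝ) ≠ 0 := by exact_mod_cast hm
  simp only [madicPoint, zpow_add_one₀ this]
  push_cast
  field_simp

theorem mem_Icc_madicPoint (hm : 0 < m) {x : ℝ} (hx : (m : ℝ) ^ k * x - j ∈ Icc (0 : ℝ) 1) :
    x ∈ Icc (madicPoint m k j) (madicPoint m k (j + 1)) := by
  have hP : (0 : ℝ) < (m : ℝ) ^ k := zpow_pos (by exact_mod_cast hm) k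
  simp only [madicPoint, mem_Icc, div_le_iff₀ hP, le_div_iff₀ hP] at hx ⊢
  push_cast
  constructor <;> linarith

theorem sub_mem_Ioo_of_mem_madicPoint (hm : 0 < m) {l : ℕ} {x : ℝ}
    (hx : x ∈ Ioo (madicPoint m (k + 1) (m * j + l)) (madicPoint m (k + 1) (m * j + l + 1))) :
    (m : ℝ) ^ k * x - j ∈ Ioo ((l : ℝ) / m) (((l : ℝ) + 1) / m) := by
  have hm' : (0 : ℝ) < m := by exact_mod_cast hm
  have hP : (0 : ℝ) < (m : ℝ) ^ k := zpow_pos hm' k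
  simp only [madicPoint, mem_Ioo, zpow_add_one₀ hm'.ne', div_lt_iff₀ hm', lt_div_iff₀ hm',
    div_lt_iff₀ (mul_pos hP hm'), lt_div_iff₀ (mul_pos hP hm')] at hx ⊢
  push_cast at hx
  constructor <;> nlinarith

theorem dilZ_eqOn_Ioo {g : ℝ → ℝ} (hg : IsMAdicStep m g) {l : ℕ} (hl : l < m) :
    EqOn (dilZ m g k j) (fun _ => √((m : ℝ) ^ k) * stepValue m g l)
      (Ioo (madicPoint m (k + 1) (m * j + l)) (madicPoint m (k + 1) (m * j + l + 1))) :=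
  fun _ hx => by
    rw [dilZ, hg.eqOn hl (sub_mem_Ioo_of_mem_madicPoint ((Nat.zero_le l).trans_lt hl) hx)]

theorem dilZ_eq_zero_of_notMem (hm : 0 < m) {g : ℝ → ℝ}
    (hsupp : ∀ x, x ∉ Icc (0 : ℝ) 1 → g x = 0) {x : ℝ}
    (hx : x ∉ Icc (madicPoint m k j) (madicPoint m k (j + 1))) : dilZ m g k j x = 0 := by
  rw [dilZ, hsupp _ fun h => hx (mem_Icc_madicPoint hm h), mul_zero]

end MAdic

theorem mem_Icc_madicPoint_floor {m : ℕ} (hm : 0 < m) {x : ℝ} (hx : 0 ≤ x) (k : ℕ) :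
    x ∈ Icc (madicPoint m k ⌊(m : ℝ) ^ k * x⌋₊)
      (madicPoint m k (⌊(m : ℝ) ^ k * x⌋₊ + 1)) := by
  have hP : (0 : ℝ) < (m : ℝ) ^ k := pow_pos (by exact_mod_cast hm) k
  simp only [madicPoint, zpow_natCast, mem_Icc, div_le_iff₀ hP, le_div_iff₀ hP]
  push_cast
  exact ⟨by rw [mul_comm]; exact Nat.floor_le (by positivity),
    by rw [mul_comm]; exact (Nat.lt_floor_add_one _).le⟩

theorem MeasureTheory.LocallyIntegrableOn.intervalIntegrable_of_le {ξ : ℝ → ℝ} {c a b : ℝ}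
    (hξ : LocallyIntegrableOn ξ (Ici c)) (ha : c ≤ a) (hb : c ≤ b) :
    IntervalIntegrable ξ volume a b :=
  (hξ.integrableOn_compact_subset (fun _ hx => (le_min ha hb).trans hx.1)
    isCompact_uIcc).intervalIntegrable

theorem MeasureTheory.LocallyIntegrableOn.locallyIntegrable_indicator {ξ : ℝ → ℝ}
    {s : Set ℝ} (hξ : LocallyIntegrableOn ξ s) (hs : IsClosed s) :
    LocallyIntegrable (s.indicator ξ) := by
  rw [locallyIntegrable_iff]
  intro K hK
  rw [IntegrableOn, integrable_indicator_iff hs.measurableSet, IntegrableOn,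
    Measure.restrict_restrict hs.measurableSet]
  exact hξ.integrableOn_compact_subset inter_subset_left (hK.inter_left hs)

section MAdicIntegral

variable {m : ℕ} {ξ : ℝ → ℝ} (k : ℤ) (j : ℕ)

theorem madicIntegral_eq_sum (hm : 0 < m) (hξ : LocallyIntegrableOn ξ (Ici 0)) :
    madicIntegral m ξ k j = ∑ l ∈ Finset.range m, madicIntegral m ξ (k + 1) (m * j + l) := by
  have hends := sum_integral_adjacent_intervals (f := ξ) (μ := volume)
    (a := fun l => madicPoint m (k + 1) (m * j + l)) (n := m)
    fun _ _ => hξ.intervalIntegrable_of_le madicPoint_nonneg madicPoint_nonneg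
  simp only [add_zero, ← mul_add_one, madicPoint_succ_mul hm.ne'] at hends
  exact hends.symm

theorem setIntegral_Ici_mul_dilZ (hm : 0 < m) (hξ : LocallyIntegrableOn ξ (Ici 0))
    {g : ℝ → ℝ} (hg : IsMAdicStep m g) (hsupp : ∀ x, x ∉ Icc (0 : ℝ) 1 → g x = 0) :
    ∫ t in Ici 0, ξ t * dilZ m g k j t =
      √((m : ℝ) ^ k) *
        ∑ l ∈ Finset.range m, stepValue m g l * madicIntegral m ξ (k + 1) (m * j + l) := by
  have hpieces := integral_mul_eq_sum_of_eqOn_Ioo (f := ξ) (g := dilZ m g k j)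
    (p := fun l => madicPoint m (k + 1) (m * j + l)) (n := m)
    (v := fun l => √((m : ℝ) ^ k) * stepValue m g l) (fun _ _ => madicPoint_le_succ)
    (fun _ _ => hξ.intervalIntegrable_of_le madicPoint_nonneg madicPoint_nonneg)
    (fun _ hl => dilZ_eqOn_Ioo hg hl)
  simp only [add_zero, ← mul_add_one, madicPoint_succ_mul hm.ne'] at hpieces
  rw [setIntegral_eq_of_subset_of_forall_sdiff_eq_zero measurableSet_Ici
      (fun _ hx => madicPoint_nonneg.trans (mem_Icc.1 hx).1)
      (fun _ hx => by rw [dilZ_eq_zero_of_notMem hm hsupp hx.2, mul_zero]),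
    integral_Icc_eq_integral_Ioc, ← integral_of_le madicPoint_le_succ, hpieces, Finset.mul_sum]
  simp only [mul_assoc, madicIntegral, add_assoc]

theorem Matrix.mul_apply_eq_sum_of_mulVec_eq_zero {n K : Type*} [Fintype n] [DecidableEq n]
    [Field K] {C : Matrix n n K} {r : K} (hr : r ≠ 0) (hC : C * Cᵀ = r • 1) {i₀ : n}
    (hrow : ∀ l, C i₀ l = 1) {a : n → K} (ha : ∀ i ≠ i₀, (C *ᵥ a) i = 0) (l : n) :
    r * a l = ∑ l', a l' := by
  have hCt : Cᵀ * C = r • 1 := by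
    have hinv : C * (r⁻¹ • Cᵀ) = 1 := by
      rw [Matrix.mul_smul, hC, smul_smul, inv_mul_cancel₀ hr, one_smul]
    have hinv' : (r⁻¹ • Cᵀ) * C = 1 := mul_eq_one_comm.1 hinv
    rwa [Matrix.smul_mul, inv_smul_eq_iff₀ hr] at hinv'
  have hCa : C *ᵥ a = Pi.single i₀ (∑ l', a l') := by
    ext i
    by_cases hi : i = i₀
    · subst hi
      simp [Matrix.mulVec, dotProduct, hrow]
    · simp [ha i hi, hi]
  calc r * a l = ((Cᵀ * C) *ᵥ a) l := by simp [hCt, Matrix.smul_mulVec]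
    _ = ∑ l', a l' := by simp [← Matrix.mulVec_mulVec, hCa, Matrix.mulVec_single, hrow]

noncomputable def stepMatrix (m : ℕ) (h : ℕ → ℝ → ℝ) : Matrix (Fin m) (Fin m) ℝ :=
  Matrix.of fun ν l => stepValue m (h ν) l

theorem stepMatrix_mul_transpose {m : ℕ} (hm : 0 < m) {h : ℕ → ℝ → ℝ}
    (hstep : ∀ ν < m, IsMAdicStep m (h ν))
    (horth : ∀ ν < m, ∀ ν' < m,
      (∫ x in Icc (0:ℝ) 1, h ν x * h ν' x) = if ν = ν' then 1 else 0) :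
    stepMatrix m h * (stepMatrix m h)ᵀ = (m : ℝ) • 1 := by
  ext ν ν'
  have hνν' := setIntegral_Icc_mul_of_isMAdicStep hm (hstep ν ν.2) (hstep ν' ν'.2)
  rw [horth ν ν.2 ν' ν'.2, eq_div_iff (by positivity)] at hνν'
  simp only [Fin.val_inj] at hνν'
  simp only [Matrix.mul_apply, Matrix.transpose_apply, stepMatrix, Matrix.of_apply,
    Matrix.smul_apply, Matrix.one_apply, smul_eq_mul]
  rw [Fin.sum_univ_eq_sum_range (fun l => stepValue m (h ν) l * stepValue m (h ν') l), ← hνν',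
    mul_comm]

theorem eq_zero_zero_of_forall_succ_eq_div {β : Type*} {m : ℕ} (hm : 1 < m)
    {α : ℤ → ℕ → β} (hα : ∀ k j, α (k + 1) j = α k (j / m)) (k : ℤ) (j : ℕ) :
    α k j = α 0 0 := by
  have hdesc : ∀ (d : ℕ) k j, α (k + d) j = α k (j / m ^ d) := by
    intro d
    induction d with
    | zero => simp
    | succ d ih =>
      intro k j
      rw [Nat.cast_succ, ← add_assoc, hα, ih, Nat.div_div_eq_div_mul, pow_succ']
  obtain ⟨n, hn⟩ : ∃ n : ℕ, k = n - (k.natAbs + j) :=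
    ⟨(k + (k.natAbs + j)).toNat, by omega⟩
  have hjn : j < m ^ n := by
    have : j ≤ n := by omega
    calc j < 2 ^ j := Nat.lt_two_pow_self
      _ ≤ m ^ n := (Nat.pow_le_pow_left hm j).trans (Nat.pow_le_pow_right (by omega) this)
  have hk := hdesc n (-(k.natAbs + j : ℕ)) j
  have h0 := hdesc (k.natAbs + j) (-(k.natAbs + j : ℕ)) 0
  rw [Nat.div_eq_of_lt hjn] at hk
  rw [Nat.zero_div, neg_add_cancel] at h0
  rw [h0, ← hk]
  congr 1
  omega

theorem ae_eq_const_of_madicIntegral {m : ℕ} (hm : 1 < m) {ξ : ℝ → ℝ}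
    (hξ : LocallyIntegrableOn ξ (Ici 0)) {c : ℝ}
    (hc : ∀ k j : ℕ, (m : ℝ) ^ (k : ℤ) * madicIntegral m ξ k j = c) :
    ∀ᵐ t ∂volume.restrict (Ici (0 : ℝ)), ξ t = c := by
  have hm' : (1 : ℝ) < m := by exact_mod_cast hm
  rw [ae_restrict_iff' measurableSet_Ici]
  filter_upwards [IsUnifLocDoublingMeasure.ae_tendsto_average (μ := volume)
    (hξ.locallyIntegrable_indicator isClosed_Ici) 1] with x hx hx0
  set a : ℕ → ℝ := fun k => madicPoint m k ⌊(m : ℝ) ^ k * x⌋₊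
  set b : ℕ → ℝ := fun k => madicPoint m k (⌊(m : ℝ) ^ k * x⌋₊ + 1)
  have hlen (k : ℕ) : b k - a k = ((m : ℝ) ^ k)⁻¹ := by
    simp only [a, b, madicPoint_succ_sub, zpow_natCast]
  have havg (k : ℕ) : ⨍ y in Icc (a k) (b k), (Ici 0).indicator ξ y = c := by
    have hIcc : ∫ y in Icc (a k) (b k), (Ici 0).indicator ξ y = ∫ y in Icc (a k) (b k), ξ y :=
      setIntegral_congr_fun measurableSet_Icc fun y hy =>
        indicator_of_mem (madicPoint_nonneg.trans hy.1 : y ∈ Ici 0) ξ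
    rw [setAverage_eq, Real.volume_real_Icc_of_le madicPoint_le_succ, hlen, inv_inv, hIcc,
      integral_Icc_eq_integral_Ioc, ← integral_of_le madicPoint_le_succ, smul_eq_mul,
      ← zpow_natCast]
    exact hc k _
  have hδ : Tendsto (fun k => (b k - a k) / 2) atTop (𝓝[>] 0) := by
    simp only [hlen]
    refine tendsto_nhdsWithin_iff.2
      ⟨?_, Eventually.of_forall fun k => mem_Ioi.2 (by positivity)⟩
    simpa using ((tendsto_pow_atTop_atTop_of_one_lt hm').inv_tendsto_atTop).div_const 2
  have hlim := hx (fun k => (a k + b k) / 2) _ hδ (Eventually.of_forall fun k => by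
    rw [one_mul, ← Real.Icc_eq_closedBall]
    exact mem_Icc_madicPoint_floor (by omega) hx0 k)
  simp only [← Real.Icc_eq_closedBall, havg, indicator_of_mem hx0] at hlim
  exact tendsto_nhds_unique hlim tendsto_const_nhds

theorem stmt19_general (m : ℕ) (hm : 2 ≤ m)
    (h : ℕ → ℝ → ℝ)
    (h0 : ∀ x, h 0 x = Set.indicator (Icc (0:ℝ) 1) (fun _ => (1:ℝ)) x)
    (horth : ∀ ν < m, ∀ ν' < m,
      (∫ x in Icc (0:ℝ) 1, h ν x * h ν' x) = if ν = ν' then 1 else 0)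
    (hsupp : ∀ ν < m, ∀ x, x ∉ Icc (0:ℝ) 1 → h ν x = 0)
    (hconst : ∀ ν < m, ∀ l < m, ∀ x ∈ Ioo ((l : ℝ) / m) (((l : ℝ) + 1) / m),
        ∀ y ∈ Ioo ((l : ℝ) / m) (((l : ℝ) + 1) / m), h ν x = h ν y)
    (ξ : ℝ → ℝ) (hξ : LocallyIntegrableOn ξ (Ici (0:ℝ)) volume)
    (horthξ : ∀ (k : ℤ) (j : ℕ) (ν : ℕ), 1 ≤ ν → ν < m →
      (∫ t in Ici (0:ℝ), ξ t * dilZ m (h ν) k j t) = 0) :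
    ∃ c : ℝ, ∀ᵐ t ∂(volume.restrict (Ici (0:ℝ))), ξ t = c := by
  have hm0 : 0 < m := by omega
  have hrow (l : Fin m) : stepMatrix m h ⟨0, hm0⟩ l = 1 := by
    simp only [stepMatrix, stepValue, Matrix.of_apply, h0]
    refine indicator_of_mem (mem_Icc.2 ⟨by positivity, ?_⟩) _
    rw [div_le_one (by positivity)]
    exact_mod_cast (by omega : 2 * l.val + 1 ≤ 2 * m)
  have hchild (k : ℤ) (j : ℕ) (l : Fin m) :
      (m : ℝ) * madicIntegral m ξ (k + 1) (m * j + l) = madicIntegral m ξ k j := by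
    rw [madicIntegral_eq_sum k j hm0 hξ, ← Fin.sum_univ_eq_sum_range]
    refine Matrix.mul_apply_eq_sum_of_mulVec_eq_zero (by positivity)
      (stepMatrix_mul_transpose hm0 hconst horth) hrow
      (a := fun l : Fin m => madicIntegral m ξ (k + 1) (m * j + l)) (fun ν hν => ?_) l
    have hν1 : 1 ≤ ν.val := Nat.one_le_iff_ne_zero.2 fun h => hν (Fin.ext h)
    have hcoef := setIntegral_Ici_mul_dilZ k j hm0 hξ (hconst ν ν.2) (hsupp ν ν.2)
    rw [horthξ k j ν hν1 ν.2, eq_comm, mul_eq_zero, ← Fin.sum_univ_eq_sum_range] at hcoef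
    exact hcoef.resolve_left (by positivity)
  refine ⟨(m : ℝ) ^ (0 : ℤ) * madicIntegral m ξ 0 0, ae_eq_const_of_madicIntegral hm hξ
    fun k j => eq_zero_zero_of_forall_succ_eq_div hm
      (α := fun k j => (m : ℝ) ^ k * madicIntegral m ξ k j) (fun k j => ?_) k j⟩
  have hparent := hchild k (j / m) ⟨j % m, Nat.mod_lt j hm0⟩
  rw [Nat.div_add_mod] at hparent
  rw [← hparent, zpow_add_one₀ (by positivity)]
  ring

theorem stmt19 (m : ℕ) (hm : 2 ≤ m)
    (h : ℕ → ℝ → ℝ)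
    (h0 : ∀ x, h 0 x = Set.indicator (Icc (0:ℝ) 1) (fun _ => (1:ℝ)) x)
    (horth : ∀ ν < m, ∀ ν' < m,
      (∫ x in Icc (0:ℝ) 1, h ν x * h ν' x) = if ν = ν' then 1 else 0)
    (hsupp : ∀ ν < m, ∀ x, x ∉ Icc (0:ℝ) 1 → h ν x = 0)
    (hconst : ∀ ν < m, ∀ l < m, ∀ x ∈ Ioo ((l : ℝ) / m) (((l : ℝ) + 1) / m),
        ∀ y ∈ Ioo ((l : ℝ) / m) (((l : ℝ) + 1) / m), h ν x = h ν y)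
    (ξ : ℝ → ℝ) (hξ : LocallyIntegrableOn ξ (Ici (0:ℝ)) volume)
    (hint : ∀ (k : ℤ) (j : ℕ) (ν : ℕ), 1 ≤ ν → ν < m →
      IntegrableOn (fun t => ξ t * dilZ m (h ν) k j t) (Ici (0:ℝ)) volume)
    (horthξ : ∀ (k : ℤ) (j : ℕ) (ν : ℕ), 1 ≤ ν → ν < m →
      (∫ t in Ici (0:ℝ), ξ t * dilZ m (h ν) k j t) = 0) :
    ∃ c : ℝ, ∀ᵐ t ∂(volume.restrict (Ici (0:ℝ))), ξ t = c :=
  stmt19_general m hm h h0 horth hsupp hconst ξ hξ horthξ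
end MAdicIntegral
end
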